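/- Let f : ℝ^n → ℝ be differentiable with gradient that is m-strongly monotone and M-Lipschitz (0 < m ≤ M), and let 0 < γ < 2/M. Then the map F(x) = x - γ∇f(x) satisfies ‖F(x) - F(y)‖ ≤ L‖x - y‖ for all x, y, where L = max{|1 - γm|, |1 - γM|}. -/

import Mathlib

/-! Write `d = x - y` and `u = ∇f x - ∇f y`, so that the gradient step maps `d` to `d - γ u`.
Monotonicity and Lipschitz bounds on `u` alone do not suffice (a rotation satisfies both); the
gradient structure enters through the convex, `(M - m)`-smooth function `f - (m/2)‖·‖²`, whose
gradient is cocoercive (Baillon–Haddad). This yields the interpolation inequality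
`m M ‖d‖² + ‖u‖² ≤ (M + m) ⟪u, d⟫`, and expanding `‖d - γ u‖²` with it gives the bound
`(1 - γ m)² ‖d‖²` when `γ (m + M) ≤ 2` and `(1 - γ M)² ‖d‖²` otherwise. -/

open Set

theorem le_add_deriv_add_half_of_deriv_sub_le {φ φ' : ℝ → ℝ} {c : ℝ}
    (hφ : ∀ t, HasDerivAt φ (φ' t) t) (hφ' : ∀ t ∈ Ioo (0 : ℝ) 1, φ' t - φ' 0 ≤ c * t) :
    φ 1 ≤ φ 0 + φ' 0 + c / 2 := by
  let ψ : ℝ → ℝ := fun t => φ t - t * φ' 0 - c / 2 * t ^ 2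
  have hψ : ∀ t, HasDerivAt ψ (φ' t - φ' 0 - c * t) t := fun t => by
    refine (((hφ t).sub ((hasDerivAt_id' t).mul_const (φ' 0))).sub
      ((hasDerivAt_pow 2 t).const_mul (c / 2))).congr_deriv ?_
    norm_num
    ring
  have hanti : AntitoneOn ψ (Icc 0 1) := by
    refine antitoneOn_of_hasDerivWithinAt_nonpos (convex_Icc 0 1)
      (fun t _ => (hψ t).continuousAt.continuousWithinAt)
      (fun t _ => (hψ t).hasDerivWithinAt) fun t ht => ?_
    rw [interior_Icc] at ht
    linarith [hφ' t ht]
  have := hanti (left_mem_Icc.2 zero_le_one) (right_mem_Icc.2 zero_le_one) zero_le_one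
  simp only [ψ] at this
  linarith

variable {E : Type*} [NormedAddCommGroup E] [InnerProductSpace ℝ E]

section Cocoercivity

variable {φ : E → ℝ} {g : E → E} {L : ℝ}

theorem mul_norm_sub_sq_le_inner_sub (hconvex : ∀ a b, φ a + inner ℝ (g a) (b - a) ≤ φ b)
    (hsmooth : ∀ a b, φ b ≤ φ a + inner ℝ (g a) (b - a) + L / 2 * ‖b - a‖ ^ 2) (s : ℝ)
    (x y : E) : (2 * s - L * s ^ 2) * ‖g x - g y‖ ^ 2 ≤ inner ℝ (g x - g y) (x - y) := by
  -- compare `φ` at `x - s • (g x - g y)` with the minorant at `y` and the majorant at `x`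
  have hside : ∀ x y,
      φ y + inner ℝ (g y) (x - y) + (s - L / 2 * s ^ 2) * ‖g x - g y‖ ^ 2 ≤ φ x := by
    intro x y
    set w := g x - g y
    have h1 := hconvex y (x - s • w)
    have h2 := hsmooth x (x - s • w)
    rw [show x - s • w - y = (x - y) - s • w by abel, inner_sub_right, inner_smul_right] at h1
    rw [sub_sub_cancel_left, inner_neg_right, inner_smul_right, norm_neg, norm_smul,
      Real.norm_eq_abs, mul_pow, sq_abs] at h2
    have hw : inner ℝ (g x) w - inner ℝ (g y) w = ‖w‖ ^ 2 := by
      rw [← inner_sub_left, real_inner_self_eq_norm_sq]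
    linear_combination h1 + h2 - s * hw
  have h1 := hside x y
  have h2 := hside y x
  rw [norm_sub_rev] at h2
  have : inner ℝ (g x) (y - x) = - inner ℝ (g x) (x - y) := by rw [← inner_neg_right, neg_sub]
  rw [inner_sub_left]
  linarith

theorem norm_sub_sq_le_mul_inner_sub (hL : 0 ≤ L)
    (hconvex : ∀ a b, φ a + inner ℝ (g a) (b - a) ≤ φ b)
    (hsmooth : ∀ a b, φ b ≤ φ a + inner ℝ (g a) (b - a) + L / 2 * ‖b - a‖ ^ 2) (x y : E) :
    ‖g x - g y‖ ^ 2 ≤ L * inner ℝ (g x - g y) (x - y) := by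
  have key := mul_norm_sub_sq_le_inner_sub hconvex hsmooth
  rcases hL.eq_or_lt with rfl | hL
  · rw [zero_mul]
    by_contra! hpos
    have := key ((inner ℝ (g x - g y) (x - y) + 1) / (2 * ‖g x - g y‖ ^ 2)) x y
    rw [zero_mul, sub_zero, mul_div_assoc', mul_div_mul_left _ _ two_ne_zero,
      div_mul_cancel₀ _ hpos.ne'] at this
    linarith
  · have := key L⁻¹ x y
    field_simp at this
    nlinarith

end Cocoercivity

theorem norm_sub_smul_le_max_mul_norm {u d : E} {m M γ : ℝ} (hm : 0 < m) (hmM : m ≤ M)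
    (hγ : 0 < γ) (h : m * M * ‖d‖ ^ 2 + ‖u‖ ^ 2 ≤ (M + m) * inner ℝ u d) :
    ‖d - γ • u‖ ≤ max |1 - γ * m| |1 - γ * M| * ‖d‖ := by
  have hcs := real_inner_le_norm u d
  have hd := norm_nonneg d
  have hu := norm_nonneg u
  -- by Cauchy–Schwarz, `‖u‖` lies between the roots of `r² - (M + m) ‖d‖ r + m M ‖d‖²`
  have hbetween : (‖u‖ - m * ‖d‖) * (‖u‖ - M * ‖d‖) ≤ 0 := by nlinarith
  have hmMd := mul_le_mul_of_nonneg_right hmM hd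
  have hlow : m * ‖d‖ ≤ ‖u‖ := by
    by_contra! hlt
    nlinarith [mul_pos (sub_pos.2 hlt) (sub_pos.2 (hlt.trans_le hmMd))]
  have hup : ‖u‖ ≤ M * ‖d‖ := by
    by_contra! hlt
    nlinarith [mul_pos (sub_pos.2 hlt) (sub_pos.2 (hmMd.trans_lt hlt))]
  have hexp : ‖d - γ • u‖ ^ 2 = ‖d‖ ^ 2 - 2 * γ * inner ℝ u d + γ ^ 2 * ‖u‖ ^ 2 := by
    rw [norm_sub_sq_real, real_inner_smul_right, norm_smul, Real.norm_eq_abs, abs_of_pos hγ,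
      real_inner_comm]
    ring
  have hsq : ‖d - γ • u‖ ^ 2 ≤ (1 - γ * m) ^ 2 * ‖d‖ ^ 2 ∨
      ‖d - γ • u‖ ^ 2 ≤ (1 - γ * M) ^ 2 * ‖d‖ ^ 2 := by
    rcases le_total (γ * (m + M)) 2 with hγmM | hγmM
    · left
      nlinarith [mul_le_mul_of_nonneg_left h hγ.le, mul_nonneg (mul_nonneg hγ.le
        (sub_nonneg.2 (pow_le_pow_left₀ (by positivity) hlow 2))) (sub_nonneg.2 hγmM)]
    · right
      nlinarith [mul_le_mul_of_nonneg_left h hγ.le, mul_nonneg (mul_nonneg hγ.le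
        (sub_nonneg.2 (pow_le_pow_left₀ hu hup 2))) (sub_nonneg.2 hγmM)]
  refine (sq_le_sq₀ (norm_nonneg _) (by positivity)).1 (hsq.elim (·.trans ?_) (·.trans ?_)) <;>
    rw [mul_pow, ← sq_abs] <;> gcongr
  exacts [le_max_left _ _, le_max_right _ _]

section Gradient

variable [CompleteSpace E]

theorem HasGradientAt.hasDerivAt_comp_add_smul {f : E → ℝ} {g x d : E} {t : ℝ}
    (hf : HasGradientAt f g (x + t • d)) :
    HasDerivAt (fun s : ℝ => f (x + s • d)) (inner ℝ g d) t := by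
  have hline : HasDerivAt (fun s : ℝ => x + s • d) d t := by
    simpa using ((hasDerivAt_id t).smul_const d).const_add x
  have h := hf.hasFDerivAt.comp_hasDerivAt t hline
  simp only [InnerProductSpace.toDual_apply_apply] at h
  exact h

variable {f : E → ℝ} {f' : E → E}

theorem le_add_inner_add_of_inner_sub_le {L : ℝ} (hf : ∀ x, HasGradientAt f (f' x) x)
    (hL : ∀ x y, inner ℝ (f' x - f' y) (x - y) ≤ L * ‖x - y‖ ^ 2) (x y : E) :
    f y ≤ f x + inner ℝ (f' x) (y - x) + L / 2 * ‖y - x‖ ^ 2 := by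
  have key := le_add_deriv_add_half_of_deriv_sub_le (c := L * ‖y - x‖ ^ 2)
    (φ' := fun t => inner ℝ (f' (x + t • (y - x))) (y - x))
    (fun t => (hf (x + t • (y - x))).hasDerivAt_comp_add_smul) fun t ht => by
      have h := hL (x + t • (y - x)) x
      rw [add_sub_cancel_left, inner_smul_right, norm_smul, Real.norm_eq_abs,
        abs_of_pos ht.1] at h
      simp only [zero_smul, add_zero, ← inner_sub_left]
      nlinarith [ht.1]
  simp only [one_smul, zero_smul, add_zero, add_sub_cancel] at key
  linarith

theorem add_inner_add_le_of_le_inner_sub {m : ℝ} (hf : ∀ x, HasGradientAt f (f' x) x)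
    (hm : ∀ x y, m * ‖x - y‖ ^ 2 ≤ inner ℝ (f' x - f' y) (x - y)) (x y : E) :
    f x + inner ℝ (f' x) (y - x) + m / 2 * ‖y - x‖ ^ 2 ≤ f y := by
  have hneg : ∀ x, HasGradientAt (-f) (-f' x) x := fun x => by
    simpa using ((hf x).hasFDerivAt.neg).hasGradientAt
  have := le_add_inner_add_of_inner_sub_le hneg (L := -m) (fun x y => by
    rw [← neg_sub', inner_neg_left]
    linarith [hm x y]) x y
  simp only [Pi.neg_apply, inner_neg_left] at this
  linarith

theorem mul_norm_sub_sq_add_norm_sub_sq_le_mul_inner {m M : ℝ} (hmM : m ≤ M)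
    (hf : ∀ x, HasGradientAt f (f' x) x)
    (hm : ∀ x y, m * ‖x - y‖ ^ 2 ≤ inner ℝ (f' x - f' y) (x - y))
    (hM : ∀ x y, inner ℝ (f' x - f' y) (x - y) ≤ M * ‖x - y‖ ^ 2) (x y : E) :
    m * M * ‖x - y‖ ^ 2 + ‖f' x - f' y‖ ^ 2 ≤ (M + m) * inner ℝ (f' x - f' y) (x - y) := by
  have hsq (a b : E) : ‖b‖ ^ 2 = ‖a‖ ^ 2 + 2 * inner ℝ a (b - a) + ‖b - a‖ ^ 2 := by
    simpa using norm_add_sq_real a (b - a)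
  have hcoc := norm_sub_sq_le_mul_inner_sub (sub_nonneg.2 hmM)
    (φ := fun a => f a - m / 2 * ‖a‖ ^ 2) (g := fun a => f' a - m • a)
    (fun a b => by
      rw [inner_sub_left, real_inner_smul_left]
      linear_combination add_inner_add_le_of_le_inner_sub hf hm a b + m / 2 * hsq a b)
    (fun a b => by
      rw [inner_sub_left, real_inner_smul_left]
      linear_combination le_add_inner_add_of_inner_sub_le hf hM a b - m / 2 * hsq a b) x y
  have hsplit : f' x - m • x - (f' y - m • y) = (f' x - f' y) - m • (x - y) := by
    rw [smul_sub]; abel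
  have hnorm : ‖(f' x - f' y) - m • (x - y)‖ ^ 2 = ‖f' x - f' y‖ ^ 2
      - 2 * m * inner ℝ (f' x - f' y) (x - y) + m ^ 2 * ‖x - y‖ ^ 2 := by
    rw [norm_sub_sq_real, real_inner_smul_right, norm_smul, Real.norm_eq_abs, mul_pow, sq_abs]
    ring
  have hinner : inner ℝ ((f' x - f' y) - m • (x - y)) (x - y) =
      inner ℝ (f' x - f' y) (x - y) - m * ‖x - y‖ ^ 2 := by
    rw [inner_sub_left, real_inner_smul_left, real_inner_self_eq_norm_sq]
  rw [hsplit, hnorm, hinner] at hcoc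
  linear_combination hcoc

end Gradient

open EuclideanSpace in
theorem stmt0_general (n : ℕ) (f : EuclideanSpace ℝ (Fin n) → ℝ)
    (hf : Differentiable ℝ f)
    (m M γ : ℝ) (hm : 0 < m) (hmM : m ≤ M)
    (hmono : ∀ x y, m * ‖x - y‖ ^ 2 ≤ inner ℝ (gradient f x - gradient f y) (x - y))
    (hlip : ∀ x y, ‖gradient f x - gradient f y‖ ≤ M * ‖x - y‖)
    (hγ0 : 0 < γ) :
    ∀ x y, ‖(x - γ • gradient f x) - (y - γ • gradient f y)‖ ≤
      max |1 - γ * m| |1 - γ * M| * ‖x - y‖ := by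
  intro x y
  have hM : ∀ x y, inner ℝ (gradient f x - gradient f y) (x - y) ≤ M * ‖x - y‖ ^ 2 :=
    fun x y => calc
      _ ≤ ‖gradient f x - gradient f y‖ * ‖x - y‖ := real_inner_le_norm _ _
      _ ≤ M * ‖x - y‖ * ‖x - y‖ := by gcongr; exact hlip x y
      _ = M * ‖x - y‖ ^ 2 := by ring
  have hinterp := mul_norm_sub_sq_add_norm_sub_sq_le_mul_inner hmM
    (fun x => (hf x).hasGradientAt) hmono hM x y
  rw [show (x - γ • gradient f x) - (y - γ • gradient f y) =
    (x - y) - γ • (gradient f x - gradient f y) by rw [smul_sub]; abel]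
  exact norm_sub_smul_le_max_mul_norm hm hmM hγ0 hinterp

open EuclideanSpace in
theorem stmt0 (n : ℕ) (f : EuclideanSpace ℝ (Fin n) → ℝ)
    (hf : Differentiable ℝ f)
    (m M γ : ℝ) (hm : 0 < m) (hmM : m ≤ M)
    (hmono : ∀ x y, m * ‖x - y‖ ^ 2 ≤ inner ℝ (gradient f x - gradient f y) (x - y))
    (hlip : ∀ x y, ‖gradient f x - gradient f y‖ ≤ M * ‖x - y‖)
    (hγ0 : 0 < γ) (hγ : γ < 2 / M) :
    ∀ x y, ‖(x - γ • gradient f x) - (y - γ • gradient f y)‖ ≤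
      max |1 - γ * m| |1 - γ * M| * ‖x - y‖ :=
  stmt0_general n f hf m M γ hm hmM hmono hlip hγ0
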